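/- arXiv:cs/0508119 — 2 statements merged into one kernel-verified Lean document; each statement's English description precedes it below -/
import Mathlib

section
/- Let (Ȳ,Z̄,V) be random variables over finite alphabets with joint pmf p'(ȳ,v)·∏_{m=1}^{M'} q'_m(z_m|y_m). Then for any two disjoint nonempty sets I, I' ⊆ {1,…,M'}: I(Ȳ_{I∪I'};Z̄_{I∪I'}|Z̄_{(I∪I')^c},V) = I(Ȳ_I;Z̄_I|Z̄_{(I∪I')^c},V) + I(Ȳ_{I'};Z̄_{I'}|Z̄_{I'^c},V). -/
open Finset
open scoped Classical

noncomputable section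

/-- The distribution (pmf) of the random variable `X` under the pmf `P` on the finite
sample space `Ω`. -/
def dist {Ω α : Type*} [Fintype Ω] [Fintype α] (P : Ω → ℝ) (X : Ω → α) (a : α) : ℝ :=
  ∑ ω, if X ω = a then P ω else 0

/-- Shannon entropy (base 2) of the random variable `X` under the pmf `P`. -/
def Hent {Ω α : Type*} [Fintype Ω] [Fintype α] (P : Ω → ℝ) (X : Ω → α) : ℝ :=
  -∑ a, dist P X a * Real.logb 2 (dist P X a)

/-- Conditional entropy `H(X | Y)`. -/
def condEnt {Ω α β : Type*} [Fintype Ω] [Fintype α] [Fintype β]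
    (P : Ω → ℝ) (X : Ω → α) (Y : Ω → β) : ℝ :=
  Hent P (fun ω => (X ω, Y ω)) - Hent P Y

/-- Conditional mutual information `I(X ; Y | Z)`. -/
def condMI {Ω α β γ : Type*} [Fintype Ω] [Fintype α] [Fintype β] [Fintype γ]
    (P : Ω → ℝ) (X : Ω → α) (Y : Ω → β) (Z : Ω → γ) : ℝ :=
  Hent P (fun ω => (X ω, Z ω)) + Hent P (fun ω => (Y ω, Z ω))
    - Hent P (fun ω => (X ω, Y ω, Z ω)) - Hent P Z

/-- The ε-strongly typical set condition for a sequence `xs` with respect to pmf `p`: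
`|N(a|xs)/n − p(a)| < ε/|α|` for every letter `a`. -/
def StronglyTypical {α : Type*} [Fintype α] (p : α → ℝ) {n : ℕ} (xs : Fin n → α)
    (ε : ℝ) : Prop :=
  ∀ a : α, |((Finset.univ.filter fun k => xs k = a).card : ℝ) / n - p a|
    < ε / Fintype.card α

section YZV

variable {M' : ℕ}

/-- Canonical sample space for `(Ȳ, Z̄, V)`. -/
abbrev Samp (𝒴 𝒵 : Fin M' → Type*) (V : Type*) : Type _ :=
  (∀ i, 𝒴 i) × (∀ i, 𝒵 i) × V

variable {𝒴 𝒵 : Fin M' → Type*} [∀ i, Fintype (𝒴 i)] [∀ i, Fintype (𝒵 i)]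
  {V : Type*} [Fintype V]

/-- The joint pmf `p'(ȳ,v) · ∏ₘ q'ₘ(zₘ | yₘ)` on the canonical sample space: conditionally
on `(Ȳ,V)` the `Zₘ` are mutually independent and `Zₘ` depends only on `Yₘ`. -/
def Pjoint (p' : (∀ i, 𝒴 i) × V → ℝ) (q : ∀ m, 𝒴 m → 𝒵 m → ℝ) :
    Samp 𝒴 𝒵 V → ℝ :=
  fun ω => p' (ω.1, ω.2.2) * ∏ m, q m (ω.1 m) (ω.2.1 m)

/-- `Ȳ_I`. -/
def Ybar (I : Finset (Fin M')) : Samp 𝒴 𝒵 V → (∀ i : I, 𝒴 i.1) := fun ω i => ω.1 i.1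

/-- `Z̄_I`. -/
def Zbar (I : Finset (Fin M')) : Samp 𝒴 𝒵 V → (∀ i : I, 𝒵 i.1) := fun ω i => ω.2.1 i.1

/-- The pair `(Z̄_I, V)` used as a conditioning variable. -/
def ZbarV (I : Finset (Fin M')) : Samp 𝒴 𝒵 V → (∀ i : I, 𝒵 i.1) × V :=
  fun ω => (fun i => ω.2.1 i.1, ω.2.2)

/-- Membership in the region `B*`: `I(Ȳ_I; Z̄_I | Z̄_{Iᶜ}, V) ≤ Σ_{i∈I} R_i` for every
nonempty `I ⊆ {1,…,M'}`. -/
def memBstar (p' : (∀ i, 𝒴 i) × V → ℝ) (q : ∀ m, 𝒴 m → 𝒵 m → ℝ)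
    (R : Fin M' → ℝ) : Prop :=
  ∀ I : Finset (Fin M'), I.Nonempty →
    condMI (Pjoint p' q) (Ybar I) (Zbar I) (ZbarV Iᶜ) ≤ ∑ i ∈ I, R i

end YZV

/-!
A conditional mutual information `I(Ȳ_S; Z̄_T | Z̄_U, V)` unfolds into four joint entropies,
`H(Ȳ_S, Z̄_U, V) + H(Z̄_{T∪U}, V) - H(Ȳ_S, Z̄_{T∪U}, V) - H(Z̄_U, V)`. Since each `Z_m` is
produced from `Y_m` alone by the channel `q'_m`, for disjoint `S, W` the pmf of
`(Ȳ_S, Z̄_{S∪W}, V)` is that of `(Ȳ_S, Z̄_W, V)` times `∏_{m∈S} q'_m(z_m|y_m)`, whence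
`H(Ȳ_S, Z̄_{S∪W}, V) - H(Ȳ_S, Z̄_W, V) = ∑_{m∈S} H(Z_m | Y_m)`. Applied to the pairs
`(I ∪ I', (I ∪ I')ᶜ)`, `(I, (I ∪ I')ᶜ)` and `(I', I'ᶜ)`, and using `I ∪ (I ∪ I')ᶜ = I'ᶜ`, both sides
of the identity become `H(Z̄, V) - H(Z̄_{(I∪I')ᶜ}, V) - ∑_{m∈I∪I'} H(Z_m | Y_m)`.
-/

section Entropy

variable {Ω α β : Type*} [Fintype Ω] [Fintype α] [Fintype β]

theorem sum_dist_mul (P : Ω → ℝ) (X : Ω → α) (f : α → ℝ) :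
    ∑ a, dist P X a * f a = ∑ ω, P ω * f (X ω) := by
  simp only [_root_.dist, sum_mul, ite_mul, zero_mul]
  rw [sum_comm]
  exact sum_congr rfl fun ω _ => by simp

theorem Hent_eq_neg_sum (P : Ω → ℝ) (X : Ω → α) :
    Hent P X = -∑ ω, P ω * Real.logb 2 (dist P X (X ω)) := by
  rw [Hent, sum_dist_mul]

theorem le_dist_self {P : Ω → ℝ} (hP : ∀ ω, 0 ≤ P ω) (X : Ω → α) (ω : Ω) :
    P ω ≤ dist P X (X ω) := by
  simpa [_root_.dist] using single_le_sum (f := fun ω' => if X ω' = X ω then P ω' else 0)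
    (fun ω' _ => by split_ifs <;> simp [hP]) (mem_univ ω)

theorem Hent_comp_of_injective (P : Ω → ℝ) (X : Ω → α) {g : α → β}
    (hg : Function.Injective g) : Hent P (g ∘ X) = Hent P X := by
  have hdist (a : α) : dist P (g ∘ X) (g a) = dist P X a := by
    simp only [_root_.dist, Function.comp_apply, hg.eq_iff]
  simp only [Hent_eq_neg_sum, Function.comp_apply, hdist]

theorem Hent_sub_Hent_of_dist_eq_mul {P : Ω → ℝ} (hP : ∀ ω, 0 ≤ P ω) (X : Ω → α) (Y : Ω → β)
    (f : Ω → ℝ) (h : ∀ ω, P ω ≠ 0 → dist P X (X ω) = dist P Y (Y ω) * f ω) :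
    Hent P X - Hent P Y = -∑ ω, P ω * Real.logb 2 (f ω) := by
  rw [Hent_eq_neg_sum, Hent_eq_neg_sum, neg_sub_neg, ← sum_sub_distrib,
    ← sum_neg_distrib]
  refine sum_congr rfl fun ω _ => ?_
  rcases eq_or_ne (P ω) 0 with hω | hω
  · simp [hω]
  · have hpos : 0 < dist P X (X ω) := (lt_of_le_of_ne (hP ω) hω.symm).trans_le
      (le_dist_self hP X ω)
    rw [h ω hω] at hpos ⊢
    have hY : dist P Y (Y ω) ≠ 0 := by rintro hY; simp [hY] at hpos
    have hf : f ω ≠ 0 := by rintro hf; simp [hf] at hpos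
    rw [Real.logb_mul hY hf]
    ring

end Entropy

theorem sum_ite_restrict_eq_prod {ι : Type*} [Fintype ι] [DecidableEq ι] {κ : ι → Type*}
    [∀ i, Fintype (κ i)]
    (g : ∀ i, κ i → ℝ) (hg : ∀ i, ∑ z, g i z = 1) (T : Finset ι) (zt : ∀ i : T, κ i) :
    ∑ z : ∀ i, κ i, (if T.restrict z = zt then ∏ i, g i (z i) else 0) = ∏ i : T, g i (zt i) := by
  set f : ∀ i, κ i → ℝ := fun i z => if hi : i ∈ T then (if z = zt ⟨i, hi⟩ then g i z else 0)
    else g i z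
  have hprod (z : ∀ i, κ i) :
      (if T.restrict z = zt then ∏ i, g i (z i) else 0) = ∏ i, f i (z i) := by
    split_ifs with hz
    · refine prod_congr rfl fun i _ => ?_
      by_cases hi : i ∈ T
      · simp [f, hi, ← hz]
      · simp [f, hi]
    · obtain ⟨i, hi⟩ := Function.ne_iff.mp hz
      have hi' : z i ≠ zt i := hi
      exact (prod_eq_zero (mem_univ i.1) (by simp [f, hi'])).symm
  have hsum (i : ι) : ∑ z, f i z = if hi : i ∈ T then g i (zt ⟨i, hi⟩) else 1 := by
    by_cases hi : i ∈ T <;> simp [f, hi, hg]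
  simp_rw [hprod, ← Fintype.prod_sum, hsum]
  rw [← prod_subset (subset_univ T) fun i _ hi => dif_neg hi,
    ← prod_coe_sort]
  exact prod_congr rfl fun i _ => dif_pos i.2

theorem Finset.restrict₂_union_injective {ι : Type*} [DecidableEq ι] {π : ι → Type*}
    (s t : Finset ι) :
    Function.Injective fun f : (∀ i : ↥(s ∪ t), π i) =>
      (restrict₂ subset_union_left f, restrict₂ subset_union_right f) := by
  intro f f' h
  simp only [Prod.mk.injEq] at h
  funext ⟨i, hi⟩
  rcases mem_union.mp hi with hs | ht
  · exact congrFun h.1 ⟨i, hs⟩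
  · exact congrFun h.2 ⟨i, ht⟩

section Channel

variable {M' : ℕ} {𝒴 𝒵 : Fin M' → Type*} [∀ i, Fintype (𝒴 i)] [∀ i, Fintype (𝒵 i)]
  {V : Type*} [Fintype V] (p' : (∀ i, 𝒴 i) × V → ℝ) (q : ∀ m, 𝒴 m → 𝒵 m → ℝ)

theorem condMI_Ybar_Zbar_ZbarV (P : Samp 𝒴 𝒵 V → ℝ) (S T U : Finset (Fin M')) :
    condMI P (Ybar S) (Zbar T) (ZbarV U)
      = Hent P (fun ω => (Ybar S ω, ZbarV U ω)) + Hent P (ZbarV (T ∪ U))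
        - Hent P (fun ω => (Ybar S ω, ZbarV (T ∪ U) ω)) - Hent P (ZbarV U) := by
  set g := Equiv.prodAssoc _ _ _ ∘ Prod.map (fun z : ∀ i : ↥(T ∪ U), 𝒵 i =>
    (restrict₂ subset_union_left z, restrict₂ subset_union_right z))
    (id : V → V)
  have hg : Function.Injective g := (Equiv.injective _).comp
    ((restrict₂_union_injective T U).prodMap Function.injective_id)
  have hZ : (fun ω : Samp 𝒴 𝒵 V => (Zbar T ω, ZbarV U ω)) = g ∘ ZbarV (T ∪ U) := rfl
  have hYZ : (fun ω : Samp 𝒴 𝒵 V => (Ybar S ω, Zbar T ω, ZbarV U ω))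
      = Prod.map id g ∘ fun ω => (Ybar S ω, ZbarV (T ∪ U) ω) := rfl
  rw [condMI, hZ, hYZ, Hent_comp_of_injective _ _ hg,
    Hent_comp_of_injective _ _ (Function.injective_id.prodMap hg)]

theorem dist_Ybar_ZbarV (hq1 : ∀ m y, ∑ z, q m y z = 1) (S T : Finset (Fin M'))
    (ys : ∀ i : S, 𝒴 i) (zv : (∀ i : T, 𝒵 i) × V) :
    dist (Pjoint p' q) (fun ω => (Ybar S ω, ZbarV T ω)) (ys, zv)
      = ∑ y, if S.restrict y = ys then p' (y, zv.2) * ∏ i : T, q i (y i) (zv.1 i) else 0 := by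
  obtain ⟨zt, v⟩ := zv
  simp only [_root_.dist, Fintype.sum_prod_type, Pjoint, ZbarV, Prod.mk.injEq]
  refine sum_congr rfl fun y _ => ?_
  change ∑ z, ∑ v', (if S.restrict y = ys ∧ T.restrict z = zt ∧ v' = v then _ else 0) = _
  split_ifs with hy
  · simp only [hy, true_and, ite_and]
    rw [← sum_ite_restrict_eq_prod (fun i => q i (y i)) (fun i => hq1 i (y i)) T zt,
      mul_sum]
    refine sum_congr rfl fun z _ => ?_
    split_ifs <;> simp
  · simp [hy]

theorem dist_Ybar_ZbarV_union (hq1 : ∀ m y, ∑ z, q m y z = 1) {S W : Finset (Fin M')}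
    (hSW : Disjoint S W) (ω : Samp 𝒴 𝒵 V) :
    dist (Pjoint p' q) (fun ω => (Ybar S ω, ZbarV (S ∪ W) ω)) (Ybar S ω, ZbarV (S ∪ W) ω)
      = dist (Pjoint p' q) (fun ω => (Ybar S ω, ZbarV W ω)) (Ybar S ω, ZbarV W ω)
        * ∏ m ∈ S, q m (ω.1 m) (ω.2.1 m) := by
  rw [dist_Ybar_ZbarV p' q hq1, dist_Ybar_ZbarV p' q hq1, sum_mul]
  refine sum_congr rfl fun y _ => ?_
  split_ifs with hy
  · have hS : ∏ m ∈ S, q m (y m) (ω.2.1 m) = ∏ m ∈ S, q m (ω.1 m) (ω.2.1 m) :=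
      prod_congr rfl fun m hm => by rw [show y m = ω.1 m from congrFun hy ⟨m, hm⟩]
    simp only [ZbarV, prod_coe_sort (S ∪ W) fun m => q m (y m) (ω.2.1 m),
      prod_coe_sort W fun m => q m (y m) (ω.2.1 m), prod_union hSW, hS]
    ring
  · simp

/-- `H(Z_m | Y_m)` under `Pjoint p' q`. -/
def channelEnt (m : Fin M') : ℝ :=
  -∑ ω, Pjoint p' q ω * Real.logb 2 (q m (ω.1 m) (ω.2.1 m))

theorem Hent_Ybar_ZbarV_union_sub (hp'0 : ∀ yv, 0 ≤ p' yv) (hq0 : ∀ m y z, 0 ≤ q m y z)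
    (hq1 : ∀ m y, ∑ z, q m y z = 1) {S W : Finset (Fin M')} (hSW : Disjoint S W) :
    Hent (Pjoint p' q) (fun ω => (Ybar S ω, ZbarV (S ∪ W) ω))
        - Hent (Pjoint p' q) (fun ω => (Ybar S ω, ZbarV W ω))
      = ∑ m ∈ S, channelEnt p' q m := by
  have hP (ω : Samp 𝒴 𝒵 V) : 0 ≤ Pjoint p' q ω :=
    mul_nonneg (hp'0 _) (prod_nonneg fun m _ => hq0 m _ _)
  rw [Hent_sub_Hent_of_dist_eq_mul hP _ _ _ fun ω _ => dist_Ybar_ZbarV_union p' q hq1 hSW ω]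
  simp only [channelEnt, ← sum_neg_distrib]
  rw [sum_comm]
  refine sum_congr rfl fun ω _ => ?_
  rcases eq_or_ne (Pjoint p' q ω) 0 with hω | hω
  · simp [hω]
  · have hq (m : Fin M') : q m (ω.1 m) (ω.2.1 m) ≠ 0 := fun hm =>
      hω (mul_eq_zero_of_right _ (prod_eq_zero (mem_univ m) hm))
    rw [Real.logb_prod _ _ fun m _ => hq m, mul_sum, sum_neg_distrib]

end Channel

theorem statement_4_general (M' : ℕ) (𝒴 𝒵 : Fin M' → Type) [∀ i, Fintype (𝒴 i)]
    [∀ i, Fintype (𝒵 i)] (V : Type) [Fintype V]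
    (p' : (∀ i, 𝒴 i) × V → ℝ) (q : ∀ m, 𝒴 m → 𝒵 m → ℝ)
    (hp'0 : ∀ yv, 0 ≤ p' yv)
    (hq0 : ∀ m y z, 0 ≤ q m y z) (hq1 : ∀ m y, ∑ z, q m y z = 1)
    (I I' : Finset (Fin M'))
    (hII' : Disjoint I I') :
    condMI (Pjoint p' q) (Ybar (I ∪ I')) (Zbar (I ∪ I')) (ZbarV (I ∪ I')ᶜ)
      = condMI (Pjoint p' q) (Ybar I) (Zbar I) (ZbarV (I ∪ I')ᶜ)
        + condMI (Pjoint p' q) (Ybar I') (Zbar I') (ZbarV I'ᶜ) := by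
  have hIc : I ∪ (I ∪ I')ᶜ = I'ᶜ := by
    ext x
    have hx : x ∈ I → x ∉ I' := fun h => disjoint_left.mp hII' h
    simp only [mem_union, mem_compl]
    tauto
  have hJ : Disjoint (I ∪ I') (I ∪ I')ᶜ := disjoint_compl_right
  have hentJ := Hent_Ybar_ZbarV_union_sub p' q hp'0 hq0 hq1 hJ
  have hentI := Hent_Ybar_ZbarV_union_sub p' q hp'0 hq0 hq1
    (hJ.mono_left subset_union_left)
  have hentI' := Hent_Ybar_ZbarV_union_sub p' q hp'0 hq0 hq1 (disjoint_compl_right (a := I'))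
  rw [union_compl, sum_union hII'] at hentJ
  rw [hIc] at hentI
  rw [union_compl] at hentI'
  simp only [condMI_Ybar_Zbar_ZbarV]
  rw [union_compl, union_compl, hIc]
  linarith

/-- Lemma B.2 (le:chain) of the paper: for disjoint nonempty `I, I' ⊆ {1,…,M'}`,
`I(Ȳ_{I∪I'}; Z̄_{I∪I'} | Z̄_{(I∪I')ᶜ}, V)
  = I(Ȳ_I; Z̄_I | Z̄_{(I∪I')ᶜ}, V) + I(Ȳ_{I'}; Z̄_{I'} | Z̄_{I'ᶜ}, V)`. -/
theorem statement_4 (M' : ℕ) (𝒴 𝒵 : Fin M' → Type) [∀ i, Fintype (𝒴 i)]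
    [∀ i, Fintype (𝒵 i)] (V : Type) [Fintype V]
    (p' : (∀ i, 𝒴 i) × V → ℝ) (q : ∀ m, 𝒴 m → 𝒵 m → ℝ)
    (hp'0 : ∀ yv, 0 ≤ p' yv) (hp'1 : ∑ yv, p' yv = 1)
    (hq0 : ∀ m y z, 0 ≤ q m y z) (hq1 : ∀ m y, ∑ z, q m y z = 1)
    (I I' : Finset (Fin M')) (hI : I.Nonempty) (hI' : I'.Nonempty)
    (hII' : Disjoint I I') :
    condMI (Pjoint p' q) (Ybar (I ∪ I')) (Zbar (I ∪ I')) (ZbarV (I ∪ I')ᶜ)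
      = condMI (Pjoint p' q) (Ybar I) (Zbar I) (ZbarV (I ∪ I')ᶜ)
        + condMI (Pjoint p' q) (Ybar I') (Zbar I') (ZbarV I'ᶜ) :=
  statement_4_general M' 𝒴 𝒵 V p' q hp'0 hq0 hq1 I I' hII'
end
end

section
/- Let (Ȳ,Z̄,V) be random variables over finite alphabets with joint pmf p'(ȳ,v)·∏_{m=1}^{M'} q'_m(z_m|y_m). Then for every nonempty set I ⊆ {1,…,M'}: I(Ȳ_I;Z̄_I|Z̄_{I^c},V) ≤ Σ_{i∈I} I(Y_i;Z_i|Z̄_{{1,…,i−1}},V). -/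
open Finset
open scoped Classical

noncomputable section

/-! Write `H(S, T)` for the entropy of `(Ȳ_S, Z̄_T, V)`. Since the `Zₘ` are conditionally
independent given `(Ȳ, V)` and `Zₘ` only sees `Yₘ`, adding `Zᵢ` to the observation raises
`H(S, T)` by exactly `H(Zᵢ | Yᵢ)` whenever `i ∈ S`. This turns the left side into
`H(∅, univ) − H(∅, Iᶜ) − Σ_{i∈I} H(Zᵢ | Yᵢ)` and the `i`-th summand on the right into
`H(∅, {j < i} ∪ {i}) − H(∅, {j < i}) − H(Zᵢ | Yᵢ)`. Telescoping `H(∅, ·)` from `Iᶜ` to `univ`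
by adding the elements of `I` in increasing order, each increment is at most the corresponding
one over `{j < i}`: `T ↦ H(∅, insert i T) − H(∅, T)` is antitone because conditional mutual
information is nonnegative. -/

section Entropy

variable {Ω α β γ : Type*} [Fintype Ω] [Fintype α] [Fintype β] [Fintype γ] {P : Ω → ℝ}

lemma sum_mul_comp_eq_sum_dist (X : Ω → α) (F : α → ℝ) :
    ∑ ω, P ω * F (X ω) = ∑ a, dist P X a * F a := by
  simp only [_root_.dist, Finset.sum_mul, ite_mul, zero_mul]
  rw [Finset.sum_comm]
  simp

lemma sum_dist (X : Ω → α) : ∑ a, dist P X a = ∑ ω, P ω := by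
  simpa using (sum_mul_comp_eq_sum_dist (P := P) X fun _ => 1).symm

lemma Hent_eq_neg_sum_logb_dist (X : Ω → α) :
    Hent P X = -∑ ω, P ω * Real.logb 2 (dist P X (X ω)) := by
  rw [Hent, sum_mul_comp_eq_sum_dist X fun a => Real.logb 2 (dist P X a)]

lemma Hent_congr_of_iff (X : Ω → α) (Y : Ω → β) (h : ∀ ω ω', X ω' = X ω ↔ Y ω' = Y ω) :
    Hent P X = Hent P Y := by
  simp only [Hent_eq_neg_sum_logb_dist, _root_.dist, h]

lemma dist_nonneg_of_nonneg (hP : ∀ ω, 0 ≤ P ω) (X : Ω → α) (a : α) : 0 ≤ dist P X a :=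
  Finset.sum_nonneg fun ω _ => by split_ifs <;> simp [hP]

lemma le_dist_apply (hP : ∀ ω, 0 ≤ P ω) (X : Ω → α) (ω : Ω) : P ω ≤ dist P X (X ω) := by
  simpa [_root_.dist] using Finset.single_le_sum (f := fun ω' => if X ω' = X ω then P ω' else 0)
    (fun ω' _ => by split_ifs <;> simp [hP]) (Finset.mem_univ ω)

lemma Hent_eq_sub_of_dist_eq_mul (hP : ∀ ω, 0 ≤ P ω) {X : Ω → α} {Y : Ω → β} (g : Ω → ℝ)
    (h : ∀ ω, dist P X (X ω) = g ω * dist P Y (Y ω)) :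
    Hent P X = Hent P Y - ∑ ω, P ω * Real.logb 2 (g ω) := by
  have hlog : ∀ ω, P ω * Real.logb 2 (dist P X (X ω))
      = P ω * Real.logb 2 (g ω) + P ω * Real.logb 2 (dist P Y (Y ω)) := by
    intro ω
    rcases (hP ω).eq_or_lt with h0 | h0
    · simp [← h0]
    obtain ⟨hg, hd⟩ := mul_ne_zero_iff.mp ((h ω) ▸ (h0.trans_le (le_dist_apply hP X ω)).ne')
    rw [h, Real.logb_mul hg hd, mul_add]
  simp only [Hent_eq_neg_sum_logb_dist, hlog, Finset.sum_add_distrib]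
  ring

end Entropy

section MutualInformation

variable {Ω α β γ : Type*} [Fintype Ω] [Fintype α] [Fintype β] [Fintype γ] {P : Ω → ℝ}

lemma dist_le_dist_comp (hP : ∀ ω, 0 ≤ P ω) (X : Ω → α) (f : α → β) (a : α) :
    dist P X a ≤ dist P (fun ω => f (X ω)) (f a) :=
  Finset.sum_le_sum fun ω _ => by
    by_cases h : X ω = a
    · simp [h]
    · split_ifs <;> simp [hP]

lemma Hent_comp_eq_neg_sum (X : Ω → α) (f : α → β) :
    Hent P (fun ω => f (X ω))
      = -∑ a, dist P X a * Real.logb 2 (dist P (fun ω => f (X ω)) (f a)) := by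
  rw [Hent_eq_neg_sum_logb_dist,
    sum_mul_comp_eq_sum_dist X fun a => Real.logb 2 (dist P (fun ω => f (X ω)) (f a))]

lemma sum_dist_prod_mk_left (X : Ω → α) (Z : Ω → γ) (z : γ) :
    ∑ x, dist P (fun ω => (X ω, Z ω)) (x, z) = dist P Z z := by
  simp only [_root_.dist, Prod.mk.injEq, ite_and]
  rw [Finset.sum_comm]
  simp

lemma sub_le_mul_log_div {p b : ℝ} (hp : 0 < p) (hb : 0 < b) :
    p - b ≤ p * Real.log (p / b) := by
  have hlog := Real.log_le_sub_one_of_pos (div_pos hb hp)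
  have hinv : Real.log (p / b) = -Real.log (b / p) := by rw [← Real.log_inv, inv_div]
  have : p * (b / p - 1) = b - p := by field_simp
  nlinarith [mul_le_mul_of_nonneg_left hlog hp.le]

theorem sum_mul_logb_div_nonneg {ι : Type*} [Fintype ι] {p b : ι → ℝ} (hp : ∀ i, 0 ≤ p i)
    (hb : ∀ i, 0 ≤ b i) (hpb : ∀ i, 0 < p i → 0 < b i) (hsum : ∑ i, b i ≤ ∑ i, p i) :
    0 ≤ ∑ i, p i * Real.logb 2 (p i / b i) := by
  have hterm : ∀ i, (p i - b i) / Real.log 2 ≤ p i * Real.logb 2 (p i / b i) := by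
    intro i
    rcases (hp i).eq_or_lt with h0 | h0
    · rw [← h0, zero_sub, zero_mul]
      exact div_nonpos_of_nonpos_of_nonneg (neg_nonpos.mpr (hb i)) (by positivity)
    · rw [Real.logb, ← mul_div_assoc]
      gcongr
      exact sub_le_mul_log_div h0 (hpb i h0)
  calc (0 : ℝ) ≤ ∑ i, (p i - b i) / Real.log 2 := by
        rw [← Finset.sum_div, Finset.sum_sub_distrib]
        exact div_nonneg (sub_nonneg.mpr hsum) (by positivity)
    _ ≤ _ := Finset.sum_le_sum fun i _ => hterm i

theorem condMI_nonneg (hP : ∀ ω, 0 ≤ P ω) (X : Ω → α) (Y : Ω → β) (Z : Ω → γ) :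
    0 ≤ condMI P X Y Z := by
  set T : Ω → α × β × γ := fun ω => (X ω, Y ω, Z ω)
  set p : α × β × γ → ℝ := dist P T
  set dXZ : α × γ → ℝ := dist P (fun ω => (X ω, Z ω))
  set dYZ : β × γ → ℝ := dist P (fun ω => (Y ω, Z ω))
  set dZ : γ → ℝ := dist P Z
  have hXZ : Hent P (fun ω => (X ω, Z ω)) = -∑ t, p t * Real.logb 2 (dXZ (t.1, t.2.2)) :=
    Hent_comp_eq_neg_sum T fun s => (s.1, s.2.2)
  have hYZ : Hent P (fun ω => (Y ω, Z ω)) = -∑ t, p t * Real.logb 2 (dYZ t.2) :=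
    Hent_comp_eq_neg_sum T fun s => s.2
  have hZ : Hent P Z = -∑ t, p t * Real.logb 2 (dZ t.2.2) :=
    Hent_comp_eq_neg_sum T fun s => s.2.2
  have hmarg : ∀ t, 0 < p t → 0 < dXZ (t.1, t.2.2) ∧ 0 < dYZ t.2 ∧ 0 < dZ t.2.2 := fun t ht =>
    ⟨ht.trans_le (dist_le_dist_comp hP T (fun s => (s.1, s.2.2)) t),
      ht.trans_le (dist_le_dist_comp hP T (fun s => s.2) t),
      ht.trans_le (dist_le_dist_comp hP T (fun s => s.2.2) t)⟩
  -- Gibbs' inequality against `p(x,z) p(y,z) / p(z)`, which has the same total mass as `p`.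
  have hcondMI : condMI P X Y Z
      = ∑ t, p t * Real.logb 2 (p t / (dXZ (t.1, t.2.2) * dYZ t.2 / dZ t.2.2)) := by
    have hXYZ : Hent P T = -∑ t, p t * Real.logb 2 (p t) := rfl
    rw [condMI, hXZ, hYZ, hZ, hXYZ]
    simp only [← Finset.sum_neg_distrib, ← Finset.sum_sub_distrib, ← Finset.sum_add_distrib]
    refine Finset.sum_congr rfl fun t _ => ?_
    rcases (dist_nonneg_of_nonneg hP T t).eq_or_lt with h0 | h0
    · rw [show p t = 0 from h0.symm]
      simp
    obtain ⟨h1, h2, h3⟩ := hmarg t h0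
    rw [Real.logb_div h0.ne' (by positivity), Real.logb_div (by positivity) h3.ne',
      Real.logb_mul h1.ne' h2.ne']
    ring
  have hsum : ∑ t : α × β × γ, dXZ (t.1, t.2.2) * dYZ t.2 / dZ t.2.2 = ∑ t, p t :=
    calc ∑ t : α × β × γ, dXZ (t.1, t.2.2) * dYZ t.2 / dZ t.2.2
        = ∑ z, (∑ x, dXZ (x, z)) * (∑ y, dYZ (y, z)) / dZ z := by
          simp only [Fintype.sum_prod_type, Finset.sum_mul, Finset.mul_sum, Finset.sum_div]
          rw [Finset.sum_comm_cycle]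
          exact Finset.sum_congr rfl fun _ _ => Finset.sum_comm
      _ = ∑ z, dZ z := by simp only [dXZ, dYZ, dZ, sum_dist_prod_mk_left, mul_self_div_self]
      _ = ∑ t, p t := by rw [sum_dist, sum_dist]
  rw [hcondMI]
  exact sum_mul_logb_div_nonneg (fun t => dist_nonneg_of_nonneg hP T t)
    (fun t => div_nonneg
      (mul_nonneg (dist_nonneg_of_nonneg hP _ _) (dist_nonneg_of_nonneg hP _ _))
      (dist_nonneg_of_nonneg hP _ _))
    (fun t ht => by obtain ⟨h1, h2, h3⟩ := hmarg t ht; positivity) hsum.le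

end MutualInformation

theorem sub_le_sum_of_submodular {α : Type*} [LinearOrder α] [Fintype α] (f : Finset α → ℝ)
    (hf : ∀ ⦃T T'⦄, T ⊆ T' → ∀ i, f (insert i T') - f T' ≤ f (insert i T) - f T)
    (B K : Finset α) (hK : ∀ i ∈ K, univ.filter (· < i) ⊆ B ∪ K) :
    f (B ∪ K) - f B
      ≤ ∑ i ∈ K, (f (insert i (univ.filter (· < i))) - f (univ.filter (· < i))) := by
  induction K using Finset.induction_on_max with
  | empty => simp
  | insert a K ha ih =>
    have hbelow : ∀ i ∈ insert a K, ∀ j < i, j ≠ a → j ∈ B ∪ K := fun i hi j hj hja => by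
      have := hK i hi (by simpa using hj)
      rwa [union_insert, mem_insert, or_iff_right hja] at this
    have haK : a ∉ K := fun h => (ha a h).false
    rw [union_insert, sum_insert haK]
    have hstep := hf (T := univ.filter (· < a)) (T' := B ∪ K) (fun j hj =>
      hbelow a (mem_insert_self a K) j (by simpa using hj) (by simpa using hj : j < a).ne) a
    have hrest := ih fun i hi j hj => hbelow i (mem_insert_of_mem hi) j (by simpa using hj)
      ((by simpa using hj : j < i).trans (ha i hi)).ne
    linarith

lemma sum_pi_ite_forall_eq_prod {ι : Type*} [Fintype ι] [DecidableEq ι] {κ : ι → Type*}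
    [∀ i, Fintype (κ i)] (f : ∀ i, κ i → ℝ) (hf : ∀ i, ∑ k, f i k = 1) (T : Finset ι) (x : ∀ i, κ i) :
    ∑ x' : ∀ i, κ i, (if ∀ i ∈ T, x' i = x i then ∏ i, f i (x' i) else 0)
      = ∏ i ∈ T, f i (x i) := by
  have hfilter : univ.filter (fun x' : ∀ i, κ i => ∀ i ∈ T, x' i = x i)
      = Fintype.piFinset fun i => if i ∈ T then {x i} else univ := by
    ext x'
    simp only [mem_filter, mem_univ, true_and, Fintype.mem_piFinset]
    refine forall_congr' fun i => ?_
    split_ifs with hi <;> simp [hi]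
  rw [← Finset.sum_filter, hfilter, ← Finset.prod_univ_sum]
  calc ∏ i, ∑ k ∈ (if i ∈ T then {x i} else univ), f i k
      = ∏ i, if i ∈ T then f i (x i) else 1 :=
        prod_congr rfl fun i _ => by split_ifs <;> simp [hf]
    _ = ∏ i ∈ T, f i (x i) := by rw [prod_ite_mem, univ_inter]

section Model

variable {M' : ℕ} {𝒴 𝒵 : Fin M' → Type*} {V : Type*}

def obs (S T : Finset (Fin M')) (ω : Samp 𝒴 𝒵 V) : (∀ i : S, 𝒴 i) × (∀ i : T, 𝒵 i) × V :=
  (Ybar S ω, ZbarV T ω)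

lemma obs_eq_obs_iff {S T : Finset (Fin M')} {ω ω' : Samp 𝒴 𝒵 V} :
    obs S T ω' = obs S T ω ↔
      (∀ m ∈ S, ω'.1 m = ω.1 m) ∧ (∀ m ∈ T, ω'.2.1 m = ω.2.1 m) ∧ ω'.2.2 = ω.2.2 := by
  simp [obs, Ybar, ZbarV, funext_iff]

lemma obs_eq_obs_of_subset {S T T' : Finset (Fin M')} (hT : T ⊆ T') {ω ω' : Samp 𝒴 𝒵 V}
    (h : obs S T' ω' = obs S T' ω) : obs S T ω' = obs S T ω := by
  rw [obs_eq_obs_iff] at h ⊢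
  exact ⟨h.1, fun m hm => h.2.1 m (hT hm), h.2.2⟩

lemma obs_insert_eq_obs_insert_iff {S T : Finset (Fin M')} {i : Fin M'} {ω ω' : Samp 𝒴 𝒵 V} :
    obs S (insert i T) ω' = obs S (insert i T) ω ↔
      ω'.2.1 i = ω.2.1 i ∧ obs S T ω' = obs S T ω := by
  simp only [obs_eq_obs_iff, forall_mem_insert]
  tauto

variable [∀ i, Fintype (𝒴 i)] [∀ i, Fintype (𝒵 i)] [Fintype V] {P : Samp 𝒴 𝒵 V → ℝ}

lemma Hent_ZbarV (T : Finset (Fin M')) : Hent P (ZbarV T) = Hent P (obs ∅ T) :=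
  Hent_congr_of_iff _ _ fun ω ω' => by simp [obs_eq_obs_iff, ZbarV, funext_iff]

lemma Hent_Zbar_ZbarV (A B : Finset (Fin M')) :
    Hent P (fun ω => (Zbar A ω, ZbarV B ω)) = Hent P (obs ∅ (A ∪ B)) :=
  Hent_congr_of_iff _ _ fun ω ω' => by
    simp [obs_eq_obs_iff, Zbar, ZbarV, funext_iff, or_imp, forall_and, and_assoc]

lemma Hent_Ybar_Zbar_ZbarV (S A B : Finset (Fin M')) :
    Hent P (fun ω => (Ybar S ω, Zbar A ω, ZbarV B ω)) = Hent P (obs S (A ∪ B)) :=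
  Hent_congr_of_iff _ _ fun ω ω' => by
    simp [obs_eq_obs_iff, Ybar, Zbar, ZbarV, funext_iff, or_imp, forall_and, and_assoc]

lemma Hent_Y_ZbarV (i : Fin M') (T : Finset (Fin M')) :
    Hent P (fun ω => (ω.1 i, ZbarV T ω)) = Hent P (obs {i} T) :=
  Hent_congr_of_iff _ _ fun ω ω' => by simp [obs_eq_obs_iff, ZbarV, funext_iff]

lemma Hent_Z_ZbarV (i : Fin M') (T : Finset (Fin M')) :
    Hent P (fun ω => (ω.2.1 i, ZbarV T ω)) = Hent P (obs ∅ (insert i T)) :=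
  Hent_congr_of_iff _ _ fun ω ω' => by simp [obs_eq_obs_iff, ZbarV, funext_iff, and_assoc]

lemma Hent_Y_Z_ZbarV (i : Fin M') (T : Finset (Fin M')) :
    Hent P (fun ω => (ω.1 i, ω.2.1 i, ZbarV T ω)) = Hent P (obs {i} (insert i T)) :=
  Hent_congr_of_iff _ _ fun ω ω' => by simp [obs_eq_obs_iff, ZbarV, funext_iff, and_assoc]

lemma Hent_obs_insert_sub_le (hP : ∀ ω, 0 ≤ P ω) {S T T' : Finset (Fin M')} (hT : T ⊆ T')
    (i : Fin M') :
    Hent P (obs S (insert i T')) - Hent P (obs S T')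
      ≤ Hent P (obs S (insert i T)) - Hent P (obs S T) := by
  have h1 : Hent P (fun ω => (ω.2.1 i, obs S T ω)) = Hent P (obs S (insert i T)) :=
    Hent_congr_of_iff _ _ fun ω ω' => by rw [Prod.ext_iff, obs_insert_eq_obs_insert_iff]
  have h2 : Hent P (fun ω => (obs S T' ω, obs S T ω)) = Hent P (obs S T') :=
    Hent_congr_of_iff _ _ fun ω ω' =>
      ⟨fun h => (Prod.ext_iff.mp h).1, fun h => Prod.ext h (obs_eq_obs_of_subset hT h)⟩
  have h3 : Hent P (fun ω => (ω.2.1 i, obs S T' ω, obs S T ω)) = Hent P (obs S (insert i T')) :=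
    Hent_congr_of_iff _ _ fun ω ω' => by
      rw [Prod.ext_iff, Prod.ext_iff, obs_insert_eq_obs_insert_iff]
      exact ⟨fun h => ⟨h.1, h.2.1⟩, fun h => ⟨h.1, h.2, obs_eq_obs_of_subset hT h.2⟩⟩
  -- `I(Zᵢ; Ȳ_S, Z̄_{T'}, V | Ȳ_S, Z̄_T, V) ≥ 0`
  have h := condMI_nonneg hP (fun ω => ω.2.1 i) (obs S T') (obs S T)
  rw [condMI, h1, h2, h3] at h
  linarith

end Model

section Channel

variable {M' : ℕ} {𝒴 𝒵 : Fin M' → Type*} {V : Type*}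
  {p' : (∀ i, 𝒴 i) × V → ℝ} {q : ∀ m, 𝒴 m → 𝒵 m → ℝ}

lemma Pjoint_nonneg (hp'0 : ∀ yv, 0 ≤ p' yv) (hq0 : ∀ m y z, 0 ≤ q m y z) (ω : Samp 𝒴 𝒵 V) :
    0 ≤ Pjoint p' q ω :=
  mul_nonneg (hp'0 _) (Finset.prod_nonneg fun m _ => hq0 m _ _)

variable [∀ i, Fintype (𝒴 i)] [∀ i, Fintype (𝒵 i)] [Fintype V]

lemma dist_obs (hq1 : ∀ m y, ∑ z, q m y z = 1) (S T : Finset (Fin M')) (ω : Samp 𝒴 𝒵 V) :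
    dist (Pjoint p' q) (obs S T) (obs S T ω)
      = ∑ y : ∀ m, 𝒴 m, if ∀ m ∈ S, y m = ω.1 m
          then p' (y, ω.2.2) * ∏ m ∈ T, q m (y m) (ω.2.1 m) else 0 := by
  simp only [_root_.dist, obs_eq_obs_iff, Fintype.sum_prod_type, Pjoint]
  refine Finset.sum_congr rfl fun y _ => ?_
  by_cases hy : ∀ m ∈ S, y m = ω.1 m
  · simp only [ite_and, if_pos hy, Finset.sum_ite_irrel, Finset.sum_ite_eq', Finset.mem_univ,
      if_true, Finset.sum_const_zero]
    rw [← sum_pi_ite_forall_eq_prod (fun m => q m (y m)) (fun m => hq1 m (y m)) T ω.2.1,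
      Finset.mul_sum]
    exact Finset.sum_congr rfl fun z _ => by split_ifs <;> simp
  · simp [hy]

lemma dist_obs_insert (hq1 : ∀ m y, ∑ z, q m y z = 1) {S T : Finset (Fin M')} {i : Fin M'}
    (hiS : i ∈ S) (hiT : i ∉ T) (ω : Samp 𝒴 𝒵 V) :
    dist (Pjoint p' q) (obs S (insert i T)) (obs S (insert i T) ω)
      = q i (ω.1 i) (ω.2.1 i) * dist (Pjoint p' q) (obs S T) (obs S T ω) := by
  rw [dist_obs hq1, dist_obs hq1, Finset.mul_sum]
  refine Finset.sum_congr rfl fun y _ => ?_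
  split_ifs with hy
  · rw [Finset.prod_insert hiT, hy i hiS]
    ring
  · rw [mul_zero]

variable (p' q) in
/-- `H(Zᵢ | Yᵢ)`. -/
def channelEntropy (i : Fin M') : ℝ :=
  -∑ ω : Samp 𝒴 𝒵 V, Pjoint p' q ω * Real.logb 2 (q i (ω.1 i) (ω.2.1 i))

variable (hp'0 : ∀ yv, 0 ≤ p' yv) (hq0 : ∀ m y z, 0 ≤ q m y z) (hq1 : ∀ m y, ∑ z, q m y z = 1)
include hp'0 hq0 hq1

lemma Hent_obs_insert {S T : Finset (Fin M')} {i : Fin M'} (hiS : i ∈ S) (hiT : i ∉ T) :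
    Hent (Pjoint p' q) (obs S (insert i T))
      = Hent (Pjoint p' q) (obs S T) + channelEntropy p' q i := by
  rw [Hent_eq_sub_of_dist_eq_mul (Pjoint_nonneg hp'0 hq0) _ (dist_obs_insert hq1 hiS hiT),
    channelEntropy, sub_eq_add_neg]

lemma Hent_obs_union {S K T : Finset (Fin M')} (hKS : K ⊆ S) (hKT : Disjoint K T) :
    Hent (Pjoint p' q) (obs S (K ∪ T))
      = Hent (Pjoint p' q) (obs S T) + ∑ i ∈ K, channelEntropy p' q i := by
  induction K using Finset.induction_on with
  | empty => rw [empty_union, sum_empty, add_zero]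
  | insert i K hiK ih =>
    rw [Finset.disjoint_insert_left] at hKT
    rw [insert_union, Hent_obs_insert hp'0 hq0 hq1 (hKS (mem_insert_self i K))
      (by simp [hiK, hKT.1]), ih ((subset_insert i K).trans hKS) hKT.2, sum_insert hiK]
    ring

lemma condMI_Ybar_Zbar_ZbarV_compl (I : Finset (Fin M')) :
    condMI (Pjoint p' q) (Ybar I) (Zbar I) (ZbarV Iᶜ)
      = Hent (Pjoint p' q) (obs ∅ univ) - Hent (Pjoint p' q) (obs ∅ Iᶜ)
        - ∑ i ∈ I, channelEntropy p' q i := by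
  have hYZ := Hent_obs_union hp'0 hq0 hq1 (subset_refl I) (disjoint_compl_right (a := I))
  rw [union_compl] at hYZ
  rw [condMI, Hent_Zbar_ZbarV, Hent_Ybar_Zbar_ZbarV, Hent_ZbarV, union_compl, hYZ]
  change Hent _ (obs I Iᶜ) + _ - _ - _ = _
  ring

lemma condMI_coord_ZbarV {i : Fin M'} {L : Finset (Fin M')} (hiL : i ∉ L) :
    condMI (Pjoint p' q) (fun ω : Samp 𝒴 𝒵 V => ω.1 i) (fun ω => ω.2.1 i) (ZbarV L)
      = Hent (Pjoint p' q) (obs ∅ (insert i L)) - Hent (Pjoint p' q) (obs ∅ L)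
        - channelEntropy p' q i := by
  rw [condMI, Hent_Y_ZbarV, Hent_Z_ZbarV, Hent_Y_Z_ZbarV, Hent_ZbarV,
    Hent_obs_insert hp'0 hq0 hq1 (mem_singleton_self i) hiL]
  ring

end Channel

theorem statement_9_general (M' : ℕ) (𝒴 𝒵 : Fin M' → Type) [∀ i, Fintype (𝒴 i)]
    [∀ i, Fintype (𝒵 i)] (V : Type) [Fintype V]
    (p' : (∀ i, 𝒴 i) × V → ℝ) (q : ∀ m, 𝒴 m → 𝒵 m → ℝ)
    (hp'0 : ∀ yv, 0 ≤ p' yv)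
    (hq0 : ∀ m y z, 0 ≤ q m y z) (hq1 : ∀ m y, ∑ z, q m y z = 1)
    (I : Finset (Fin M')) :
    condMI (Pjoint p' q) (Ybar I) (Zbar I) (ZbarV Iᶜ)
      ≤ ∑ i ∈ I,
          condMI (Pjoint p' q)
            (fun ω : Samp 𝒴 𝒵 V => ω.1 i)
            (fun ω : Samp 𝒴 𝒵 V => ω.2.1 i)
            (ZbarV (Finset.univ.filter fun j : Fin M' => j < i)) := by
  rw [condMI_Ybar_Zbar_ZbarV_compl hp'0 hq0 hq1,
    Finset.sum_congr rfl fun i _ => condMI_coord_ZbarV hp'0 hq0 hq1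
      (by simp : i ∉ univ.filter fun j => j < i),
    Finset.sum_sub_distrib]
  have hchain := sub_le_sum_of_submodular (fun T => Hent (Pjoint p' q) (obs ∅ T))
    (fun _ _ hT i => Hent_obs_insert_sub_le (Pjoint_nonneg hp'0 hq0) hT i) Iᶜ I
    (fun _ _ => by rw [union_comm, union_compl]; exact subset_univ _)
  rw [union_comm, union_compl] at hchain
  exact sub_le_sub_right hchain _

/-- Lemma B.7 (le:last) of the paper: for every nonempty `I ⊆ {1,…,M'}`,
`I(Ȳ_I; Z̄_I | Z̄_{Iᶜ}, V) ≤ Σ_{i∈I} I(Y_i; Z_i | Z̄_{{1,…,i−1}}, V)`. -/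
theorem statement_9 (M' : ℕ) (𝒴 𝒵 : Fin M' → Type) [∀ i, Fintype (𝒴 i)]
    [∀ i, Fintype (𝒵 i)] (V : Type) [Fintype V]
    (p' : (∀ i, 𝒴 i) × V → ℝ) (q : ∀ m, 𝒴 m → 𝒵 m → ℝ)
    (hp'0 : ∀ yv, 0 ≤ p' yv) (hp'1 : ∑ yv, p' yv = 1)
    (hq0 : ∀ m y z, 0 ≤ q m y z) (hq1 : ∀ m y, ∑ z, q m y z = 1)
    (I : Finset (Fin M')) (hI : I.Nonempty) :
    condMI (Pjoint p' q) (Ybar I) (Zbar I) (ZbarV Iᶜ)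
      ≤ ∑ i ∈ I,
          condMI (Pjoint p' q)
            (fun ω : Samp 𝒴 𝒵 V => ω.1 i)
            (fun ω : Samp 𝒴 𝒵 V => ω.2.1 i)
            (ZbarV (Finset.univ.filter fun j : Fin M' => j < i)) :=
  statement_9_general M' 𝒴 𝒵 V p' q hp'0 hq0 hq1 I
end
end
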